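/- Let m = C(t−1,3) + C(t−2,2) − 1 and let G be a 3-uniform hypergraph on t vertices with m edges whose restriction to [t−1] equals H₁ = [t−1]^{(3)} ∖ {(t−3)(t−2)(t−1)}. If E(G) contains all triples {i, j, t} with 2 ≤ i < j ≤ t−1, then G is not dense. -/

import Mathlib

structure UHypergraph (r : ℕ) where
  verts : Finset ℕ
  edges : Finset (Finset ℕ)
  edge_sub : ∀ e ∈ edges, e ⊆ verts
  edge_card : ∀ e ∈ edges, e.card = r

namespace UHypergraph

variable {r : ℕ}

/-- The polynomial value `λ(E, x) = Σ_{e ∈ E} Π_{i ∈ e} x_i`. -/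
def polyValue (E : Finset (Finset ℕ)) (x : ℕ → ℝ) : ℝ :=
  ∑ e ∈ E, ∏ i ∈ e, x i

/-- A legal weighting: nonnegative, supported on the vertex set, summing to 1. -/
def LegalWeighting (G : UHypergraph r) (x : ℕ → ℝ) : Prop :=
  (∀ i, 0 ≤ x i) ∧ (∀ i ∉ G.verts, x i = 0) ∧ ∑ i ∈ G.verts, x i = 1

/-- The Lagrangian of a hypergraph. -/
noncomputable def lagrangian (G : UHypergraph r) : ℝ :=
  sSup {l : ℝ | ∃ x, G.LegalWeighting x ∧ l = polyValue G.edges x}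

/-- An optimum weighting attains the Lagrangian. -/
def IsOptimal (G : UHypergraph r) (x : ℕ → ℝ) : Prop :=
  G.LegalWeighting x ∧ polyValue G.edges x = G.lagrangian

def IsSubgraph (H G : UHypergraph r) : Prop :=
  H.verts ⊆ G.verts ∧ H.edges ⊆ G.edges

def IsProperSubgraph (H G : UHypergraph r) : Prop :=
  H.IsSubgraph G ∧ (H.verts ≠ G.verts ∨ H.edges ≠ G.edges)

/-- A hypergraph is dense if every proper subgraph has strictly smaller Lagrangian. -/
def Dense (G : UHypergraph r) : Prop :=
  ∀ H : UHypergraph r, H.IsProperSubgraph G → H.lagrangian < G.lagrangian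

/-- The link `E_i` of a vertex `i`. -/
def link (G : UHypergraph r) (i : ℕ) : Finset (Finset ℕ) :=
  (G.edges.filter fun e => i ∈ e).image fun e => e.erase i

/-- The pair link `E_{ij}`. -/
def pairLink (G : UHypergraph r) (i j : ℕ) : Finset (Finset ℕ) :=
  (G.edges.filter fun e => i ∈ e ∧ j ∈ e).image fun e => (e.erase i).erase j

/-- `E_{i \ j} = E_i ∩ E_j^c`. -/
def linkDiff (G : UHypergraph r) (i j : ℕ) : Finset (Finset ℕ) :=
  (G.link i).filter fun A => j ∉ A ∧ insert j A ∉ G.edges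

/-- `G` contains a clique of order `t`. -/
def HasClique (G : UHypergraph r) (t : ℕ) : Prop :=
  ∃ S ⊆ G.verts, S.card = t ∧ S.powersetCard r ⊆ G.edges

/-- `G` is left-compressed: replacing a vertex of an edge by a smaller vertex
not in the edge yields an edge. -/
def LeftCompressed (G : UHypergraph r) : Prop :=
  ∀ e ∈ G.edges, ∀ i j : ℕ, i ∈ G.verts → i < j → j ∈ e → i ∉ e →
    insert i (e.erase j) ∈ G.edges

/-- The subgraph induced on a vertex set `S`. -/
def induce (G : UHypergraph r) (S : Finset ℕ) : UHypergraph r :=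
  ⟨G.verts ∩ S, G.edges.filter fun e => e ⊆ S,
   fun e he => Finset.subset_inter (G.edge_sub e (Finset.mem_filter.mp he).1)
     (Finset.mem_filter.mp he).2,
   fun e he => G.edge_card e (Finset.mem_filter.mp he).1⟩

end UHypergraph

/-- The complete `r`-graph on vertex set `{1, …, t}`. -/
def completeHG (t r : ℕ) : UHypergraph r :=
  ⟨Finset.Icc 1 t, (Finset.Icc 1 t).powersetCard r,
   fun _ he => (Finset.mem_powersetCard.mp he).1,
   fun _ he => (Finset.mem_powersetCard.mp he).2⟩

/-- `H₁ = [t-1]^{(3)} \ {(t-3)(t-2)(t-1)}`. -/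
def H1 (t : ℕ) : UHypergraph 3 :=
  ⟨Finset.Icc 1 (t-1), (completeHG (t-1) 3).edges.erase {t-3, t-2, t-1},
   fun e he => (completeHG (t-1) 3).edge_sub e (Finset.mem_of_mem_erase he),
   fun e he => (completeHG (t-1) 3).edge_card e (Finset.mem_of_mem_erase he)⟩

/-
Vertices `1` and `t` lie in no common edge: the `C(t-1,3) - 1` edges of `H₁` and the
`C(t-2,2)` triples `{i, j, t}` with `2 ≤ i < j` already exhaust the `m` edges of `G`.
For two vertices `u ≠ v` that no edge covers, the polynomial value is affine in the split of
`x u + x v` between them, with `(x u + x v) λ(x) = x u λ(y) + x v λ(z)` where `y`, `z` move all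
of that weight onto `u`, resp. `v`. Hence `λ(G) ≤ max (λ(G - v)) (λ(G - u))`, and `G` is not
dense.
-/

namespace UHypergraph

open Finset

variable {r : ℕ} {G : UHypergraph r} {x : ℕ → ℝ}

lemma LegalWeighting.le_one (hx : G.LegalWeighting x) (i : ℕ) : x i ≤ 1 := by
  obtain ⟨hnonneg, hsupp, hsum⟩ := hx
  by_cases hi : i ∈ G.verts
  · exact hsum ▸ single_le_sum (fun j _ => hnonneg j) hi
  · simp [hsupp i hi]

lemma LegalWeighting.polyValue_le_card (hx : G.LegalWeighting x) :
    polyValue G.edges x ≤ G.edges.card := by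
  calc polyValue G.edges x ≤ ∑ _e ∈ G.edges, (1 : ℝ) :=
        sum_le_sum fun e _ => prod_le_one (fun i _ => hx.1 i) fun i _ => hx.le_one i
    _ = G.edges.card := by simp

lemma polyValue_le_lagrangian (hx : G.LegalWeighting x) : polyValue G.edges x ≤ G.lagrangian :=
  le_csSup ⟨G.edges.card, by rintro l ⟨x, hx, rfl⟩; exact hx.polyValue_le_card⟩ ⟨x, hx, rfl⟩

lemma lagrangian_le_of_forall {M : ℝ} (hG : ∃ x, G.LegalWeighting x)
    (h : ∀ x, G.LegalWeighting x → polyValue G.edges x ≤ M) : G.lagrangian ≤ M := by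
  obtain ⟨x₀, hx₀⟩ := hG
  exact csSup_le ⟨_, x₀, hx₀, rfl⟩ (by rintro l ⟨x, hx, rfl⟩; exact h x hx)

lemma legalWeighting_single {u : ℕ} (hu : u ∈ G.verts) : G.LegalWeighting (Pi.single u 1) := by
  refine ⟨fun i => ?_, fun i hi => ?_, ?_⟩
  · by_cases h : i = u <;> simp [h]
  · simp [show i ≠ u by rintro rfl; exact hi hu]
  · simp [sum_pi_single', hu]

lemma induce_erase_isProperSubgraph {v : ℕ} (hv : v ∈ G.verts) :
    (G.induce (G.verts.erase v)).IsProperSubgraph G :=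
  ⟨⟨inter_subset_left, filter_subset _ _⟩, Or.inl fun h => by
    have := h ▸ hv
    simp [induce] at this⟩

lemma LegalWeighting.induce_erase {v : ℕ} (hx : G.LegalWeighting x) (hv : x v = 0) :
    (G.induce (G.verts.erase v)).LegalWeighting x := by
  obtain ⟨hnonneg, hsupp, hsum⟩ := hx
  have hverts : (G.induce (G.verts.erase v)).verts = G.verts.erase v :=
    inter_eq_right.mpr (erase_subset v G.verts)
  refine ⟨hnonneg, fun i hi => ?_, ?_⟩
  · rw [hverts, mem_erase, not_and_or, not_not] at hi
    rcases hi with rfl | hi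
    exacts [hv, hsupp i hi]
  · rw [hverts, sum_erase _ hv, hsum]

lemma polyValue_induce_erase {v : ℕ} (hv : x v = 0) :
    polyValue (G.induce (G.verts.erase v)).edges x = polyValue G.edges x := by
  refine sum_filter_of_ne fun e he hprod => ?_
  have hve : v ∉ e := fun h => hprod (prod_eq_zero h hv)
  exact fun i hi => mem_erase.mpr ⟨ne_of_mem_of_not_mem hi hve, G.edge_sub e he hi⟩

/-- `moveWeight x v u` moves the weight of `v` onto `u`. -/
def moveWeight (x : ℕ → ℝ) (v u : ℕ) : ℕ → ℝ :=
  Function.update (Function.update x u (x u + x v)) v 0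

@[simp] lemma moveWeight_apply_self (x : ℕ → ℝ) (v u : ℕ) : moveWeight x v u v = 0 := by
  simp [moveWeight]

lemma moveWeight_apply_target {u v : ℕ} (huv : u ≠ v) : moveWeight x v u u = x u + x v := by
  simp [moveWeight, huv]

lemma moveWeight_apply_of_ne {u v i : ℕ} (hu : i ≠ u) (hv : i ≠ v) : moveWeight x v u i = x i := by
  simp [moveWeight, hu, hv]

lemma prod_moveWeight_of_notMem {u v : ℕ} {s : Finset ℕ} (hu : u ∉ s) (hv : v ∉ s) :
    ∏ i ∈ s, moveWeight x v u i = ∏ i ∈ s, x i :=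
  prod_congr rfl fun _ hi =>
    moveWeight_apply_of_ne (ne_of_mem_of_not_mem hi hu) (ne_of_mem_of_not_mem hi hv)

lemma legalWeighting_moveWeight {u v : ℕ} (hx : G.LegalWeighting x) (hu : u ∈ G.verts)
    (hv : v ∈ G.verts) (huv : u ≠ v) : G.LegalWeighting (moveWeight x v u) := by
  obtain ⟨hnonneg, hsupp, hsum⟩ := hx
  refine ⟨fun i => ?_, fun i hi => ?_, ?_⟩
  · rcases eq_or_ne i u with rfl | hiu
    · rw [moveWeight_apply_target huv]; exact add_nonneg (hnonneg i) (hnonneg v)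
    rcases eq_or_ne i v with rfl | hiv
    · rw [moveWeight_apply_self]
    · rw [moveWeight_apply_of_ne hiu hiv]; exact hnonneg i
  · rw [moveWeight_apply_of_ne (by rintro rfl; exact hi hu) (by rintro rfl; exact hi hv)]
    exact hsupp i hi
  · have hu' : u ∈ G.verts.erase v := mem_erase.mpr ⟨huv, hu⟩
    have hrest : ∑ i ∈ (G.verts.erase v).erase u, moveWeight x v u i
        = ∑ i ∈ (G.verts.erase v).erase u, x i :=
      sum_congr rfl fun i hi =>
        moveWeight_apply_of_ne (mem_erase.mp hi).1 (mem_erase.mp (mem_erase.mp hi).2).1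
    rw [← add_sum_erase _ _ hv, ← add_sum_erase _ _ hu', hrest, moveWeight_apply_self,
      moveWeight_apply_target huv, ← hsum, ← add_sum_erase _ _ hv, ← add_sum_erase _ _ hu']
    ring

lemma mul_prod_eq_moveWeight {u v : ℕ} (huv : u ≠ v) {e : Finset ℕ} (he : ¬(u ∈ e ∧ v ∈ e)) :
    (x u + x v) * ∏ i ∈ e, x i
      = x u * ∏ i ∈ e, moveWeight x v u i + x v * ∏ i ∈ e, moveWeight x u v i := by
  by_cases hu : u ∈ e
  · have hv : v ∉ e := fun hv => he ⟨hu, hv⟩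
    have hu' : u ∉ e.erase u := notMem_erase u e
    have hv' : v ∉ e.erase u := fun h => hv (mem_of_mem_erase h)
    rw [← mul_prod_erase e _ hu, ← mul_prod_erase e _ hu, ← mul_prod_erase e _ hu,
      prod_moveWeight_of_notMem hu' hv', prod_moveWeight_of_notMem hv' hu',
      moveWeight_apply_target huv, moveWeight_apply_self]
    ring
  by_cases hv : v ∈ e
  · have hu' : u ∉ e.erase v := fun h => hu (mem_of_mem_erase h)
    have hv' : v ∉ e.erase v := notMem_erase v e
    rw [← mul_prod_erase e _ hv, ← mul_prod_erase e _ hv, ← mul_prod_erase e _ hv,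
      prod_moveWeight_of_notMem hu' hv', prod_moveWeight_of_notMem hv' hu',
      moveWeight_apply_target huv.symm, moveWeight_apply_self]
    ring
  · rw [prod_moveWeight_of_notMem hu hv, prod_moveWeight_of_notMem hv hu]
    ring

lemma mul_polyValue_eq_moveWeight {E : Finset (Finset ℕ)} {u v : ℕ} (huv : u ≠ v)
    (hE : ∀ e ∈ E, ¬(u ∈ e ∧ v ∈ e)) :
    (x u + x v) * polyValue E x
      = x u * polyValue E (moveWeight x v u) + x v * polyValue E (moveWeight x u v) := by
  simp only [polyValue, mul_sum, ← sum_add_distrib]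
  exact sum_congr rfl fun e he => mul_prod_eq_moveWeight huv (hE e he)

lemma lagrangian_le_max_induce_erase {u v : ℕ} (hu : u ∈ G.verts) (hv : v ∈ G.verts)
    (huv : u ≠ v) (hE : ∀ e ∈ G.edges, ¬(u ∈ e ∧ v ∈ e)) :
    G.lagrangian ≤
      max (G.induce (G.verts.erase v)).lagrangian (G.induce (G.verts.erase u)).lagrangian := by
  refine lagrangian_le_of_forall ⟨_, legalWeighting_single hu⟩ fun x hx => ?_
  set M := max (G.induce (G.verts.erase v)).lagrangian (G.induce (G.verts.erase u)).lagrangian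
  have hyM : polyValue G.edges (moveWeight x v u) ≤ M := by
    rw [← polyValue_induce_erase (moveWeight_apply_self x v u)]
    exact (polyValue_le_lagrangian ((legalWeighting_moveWeight hx hu hv huv).induce_erase
      (moveWeight_apply_self x v u))).trans (le_max_left _ _)
  have hzM : polyValue G.edges (moveWeight x u v) ≤ M := by
    rw [← polyValue_induce_erase (moveWeight_apply_self x u v)]
    exact (polyValue_le_lagrangian ((legalWeighting_moveWeight hx hv hu huv.symm).induce_erase
      (moveWeight_apply_self x u v))).trans (le_max_right _ _)
  have hxu := hx.1 u
  have hxv := hx.1 v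
  rcases (add_nonneg hxu hxv).eq_or_lt with hzero | hpos
  · have hy : moveWeight x v u = x := by
      funext i
      rcases eq_or_ne i u with rfl | hiu
      · rw [moveWeight_apply_target huv]; linarith
      rcases eq_or_ne i v with rfl | hiv
      · rw [moveWeight_apply_self]; linarith
      · exact moveWeight_apply_of_ne hiu hiv
    exact hy ▸ hyM
  · refine le_of_mul_le_mul_left ?_ hpos
    calc (x u + x v) * polyValue G.edges x
        = x u * polyValue G.edges (moveWeight x v u)
          + x v * polyValue G.edges (moveWeight x u v) := mul_polyValue_eq_moveWeight huv hE
      _ ≤ x u * M + x v * M :=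
        add_le_add (mul_le_mul_of_nonneg_left hyM hxu) (mul_le_mul_of_nonneg_left hzM hxv)
      _ = (x u + x v) * M := by ring

lemma not_dense_of_pair_uncovered {u v : ℕ} (hu : u ∈ G.verts) (hv : v ∈ G.verts)
    (huv : u ≠ v) (hE : ∀ e ∈ G.edges, ¬(u ∈ e ∧ v ∈ e)) : ¬G.Dense := fun hG =>
  (lagrangian_le_max_induce_erase hu hv huv hE).not_gt <|
    max_lt (hG _ (induce_erase_isProperSubgraph hv)) (hG _ (induce_erase_isProperSubgraph hu))

lemma card_edges_eq_card_filter_subset_add_card_filter_mem {t : ℕ} (hv : G.verts = Icc 1 t) :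
    G.edges.card = (G.edges.filter (· ⊆ Icc 1 (t - 1))).card + (G.edges.filter (t ∈ ·)).card := by
  rw [← card_filter_add_card_filter_not (s := G.edges) (· ⊆ Icc 1 (t - 1))]
  congr 2
  refine filter_congr fun e he => ⟨fun hsub => ?_, fun hte hsub => ?_⟩
  · by_contra hte
    refine hsub fun i hi => ?_
    have hit : i ≠ t := ne_of_mem_of_not_mem hi hte
    have := hv ▸ G.edge_sub e he hi
    rw [mem_Icc] at this ⊢
    omega
  · have := hsub hte
    rw [mem_Icc] at this
    omega

end UHypergraph

open Finset

lemma card_H1_edges {t : ℕ} (ht : 4 ≤ t) : (H1 t).edges.card = (t - 1).choose 3 - 1 := by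
  have hmem : ({t - 3, t - 2, t - 1} : Finset ℕ) ∈ (completeHG (t - 1) 3).edges := by
    refine mem_powersetCard.mpr ⟨fun i hi => ?_, card_eq_three.mpr ⟨_, _, _, ?_, ?_, ?_, rfl⟩⟩
    · simp only [mem_insert, mem_singleton] at hi
      rw [mem_Icc]
      omega
    all_goals omega
  rw [H1, card_erase_of_mem hmem, completeHG, card_powersetCard, Nat.card_Icc,
    Nat.add_sub_cancel]

/-- The triples `{i, j, t}` with `2 ≤ i < j ≤ t - 1`. -/
def apexTriples (t : ℕ) : Finset (Finset ℕ) :=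
  ((Icc 2 (t - 1)).powersetCard 2).image (insert t)

lemma card_apexTriples (t : ℕ) : (apexTriples t).card = (t - 2).choose 2 := by
  have hinj : Set.InjOn (insert t) ((Icc 2 (t - 1)).powersetCard 2 : Set (Finset ℕ)) := by
    intro p hp q hq hpq
    have hnotMem : ∀ s ∈ (Icc 2 (t - 1)).powersetCard 2, t ∉ s := fun s hs hts => by
      have := (mem_powersetCard.mp hs).1 hts
      rw [mem_Icc] at this
      omega
    rw [← erase_insert (hnotMem p hp), hpq, erase_insert (hnotMem q hq)]
  rw [apexTriples, card_image_of_injOn hinj, card_powersetCard, Nat.card_Icc]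
  congr 1

lemma one_notMem_of_mem_apexTriples {t : ℕ} (ht : 2 ≤ t) {e : Finset ℕ}
    (he : e ∈ apexTriples t) : 1 ∉ e := by
  obtain ⟨p, hp, rfl⟩ := mem_image.mp he
  intro h1
  rcases mem_insert.mp h1 with h | h
  · omega
  · have := (mem_powersetCard.mp hp).1 h
    rw [mem_Icc] at this
    omega

lemma apexTriples_subset_filter {t : ℕ} {E : Finset (Finset ℕ)}
    (hE : ∀ i j : ℕ, 2 ≤ i → i < j → j ≤ t - 1 → ({i, j, t} : Finset ℕ) ∈ E) :
    apexTriples t ⊆ E.filter (t ∈ ·) := by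
  intro e he
  obtain ⟨p, hp, rfl⟩ := mem_image.mp he
  obtain ⟨hpsub, hpcard⟩ := mem_powersetCard.mp hp
  obtain ⟨i, j, hij, rfl⟩ := card_eq_two.mp hpcard
  have hi := mem_Icc.mp (hpsub (mem_insert_self i {j}))
  have hj := mem_Icc.mp (hpsub (mem_insert_of_mem (mem_singleton_self j)))
  refine mem_filter.mpr ⟨?_, mem_insert_self t _⟩
  rcases hij.lt_or_gt with h | h
  · convert hE i j hi.1 h hj.2 using 1
    ext; simp only [mem_insert, mem_singleton]; tauto
  · convert hE j i hj.1 h hi.2 using 1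
    ext; simp only [mem_insert, mem_singleton]; tauto

/-- Proposition (a): if `m = C(t-1,3)+C(t-2,2)-1`, `G` is a 3-graph on `[t]`
with `m` edges, `G[[t-1]] = H₁`, and all triples `{i,j,t}` with
`2 ≤ i < j ≤ t-1` are edges of `G`, then `G` is not dense. -/
theorem prop_a_not_dense {t m : ℕ} (ht : 5 ≤ t)
    (hm : m = (t - 1).choose 3 + (t - 2).choose 2 - 1)
    (G : UHypergraph 3) (hv : G.verts = Finset.Icc 1 t) (he : G.edges.card = m)
    (hres : G.edges.filter (fun e => e ⊆ Finset.Icc 1 (t - 1)) = (H1 t).edges)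
    (hcontain : ∀ i j : ℕ, 2 ≤ i → i < j → j ≤ t - 1 →
      ({i, j, t} : Finset ℕ) ∈ G.edges) :
    ¬ G.Dense := by
  have hcard : (G.edges.filter (t ∈ ·)).card = (t - 2).choose 2 := by
    have hsplit := G.card_edges_eq_card_filter_subset_add_card_filter_mem hv
    have hpos : 0 < (t - 1).choose 3 := Nat.choose_pos (by omega)
    rw [hres, card_H1_edges (by omega), he, hm] at hsplit
    omega
  have hapex : apexTriples t = G.edges.filter (t ∈ ·) :=
    eq_of_subset_of_card_le (apexTriples_subset_filter hcontain)
      (by rw [hcard, card_apexTriples])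
  refine UHypergraph.not_dense_of_pair_uncovered (u := 1) (v := t)
    (by rw [hv, mem_Icc]; omega) (by rw [hv, mem_Icc]; omega) (by omega) ?_
  rintro e he ⟨h1e, hte⟩
  exact one_notMem_of_mem_apexTriples (by omega) (hapex ▸ mem_filter.mpr ⟨he, hte⟩) h1e
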